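/- arXiv:2305.18938 — 2 statements merged into one kernel-verified Lean document; each statement's English description precedes it below -/
import Mathlib

section
/- Let z_nm ∈ ℂ be a transmission zero of the square transfer matrix G0 with left (output) zero direction y, i.e. y^H G0(z_nm) = 0 with y ≠ 0. If Cd = G0^{-1} Td (I - Td)^{-1} is the ideal controller and the closed loop with Cd is internally stable with |z_nm| > 1, then necessarily y^H Td(z_nm) = 0. -/
/- `Td = G0 · (G0⁻¹ Td)` and stability of `Cd (I + G0 Cd)⁻¹ = G0⁻¹ Td` lets this
factorisation be evaluated at `z_nm`, so
`yᴴ Td(z_nm) = (yᴴ G0(z_nm)) · (G0⁻¹ Td)(z_nm) = 0`. -/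

open Polynomial

/-- Evaluation of a rational matrix at a point (entrywise `RatFunc.eval`). -/
noncomputable def evalMat {n : ℕ} (M : Matrix (Fin n) (Fin n) (RatFunc ℂ)) (z : ℂ) :
    Matrix (Fin n) (Fin n) ℂ :=
  Matrix.of fun i j => RatFunc.eval (RingHom.id ℂ) z (M i j)

/-- A rational matrix is stable when every entry has all its poles strictly inside
the unit circle, i.e. the (reduced) denominator of every entry has no root of
modulus `≥ 1`. -/
def MatStable {n : ℕ} (M : Matrix (Fin n) (Fin n) (RatFunc ℂ)) : Prop :=
  ∀ i j, ∀ w : ℂ, 1 ≤ ‖w‖ → (RatFunc.denom (M i j)).eval w ≠ 0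

namespace RatFunc

universe u

variable {K L : Type u} [Field K] [Field L] (f : K →+* L) (a : L)

lemma eval₂_denom_add_ne_zero {x y : RatFunc K} (hx : x.denom.eval₂ f a ≠ 0)
    (hy : y.denom.eval₂ f a ≠ 0) : (x + y).denom.eval₂ f a ≠ 0 :=
  mt (eval₂_eq_zero_of_dvd_of_eval₂_eq_zero f a (denom_add_dvd x y)) <| by
    rw [eval₂_mul]; exact mul_ne_zero hx hy

lemma eval₂_denom_mul_ne_zero {x y : RatFunc K} (hx : x.denom.eval₂ f a ≠ 0)
    (hy : y.denom.eval₂ f a ≠ 0) : (x * y).denom.eval₂ f a ≠ 0 :=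
  mt (eval₂_eq_zero_of_dvd_of_eval₂_eq_zero f a (denom_mul_dvd x y)) <| by
    rw [eval₂_mul]; exact mul_ne_zero hx hy

lemma eval₂_denom_sum_ne_zero {ι : Type*} (s : Finset ι) {g : ι → RatFunc K}
    (hg : ∀ i ∈ s, (g i).denom.eval₂ f a ≠ 0) :
    (∑ i ∈ s, g i).denom.eval₂ f a ≠ 0 := by
  classical
  induction s using Finset.induction with
  | empty => simp
  | insert i s hi ih =>
    rw [Finset.sum_insert hi]
    exact eval₂_denom_add_ne_zero f a (hg i (s.mem_insert_self i))
      (ih fun j hj => hg j (Finset.mem_insert_of_mem hj))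

lemma eval_sum {ι : Type*} (s : Finset ι) {g : ι → RatFunc K}
    (hg : ∀ i ∈ s, (g i).denom.eval₂ f a ≠ 0) :
    RatFunc.eval f a (∑ i ∈ s, g i) = ∑ i ∈ s, RatFunc.eval f a (g i) := by
  classical
  induction s using Finset.induction with
  | empty => simp
  | insert i s hi ih =>
    have hs : ∀ j ∈ s, (g j).denom.eval₂ f a ≠ 0 := fun j hj =>
      hg j (Finset.mem_insert_of_mem hj)
    rw [Finset.sum_insert hi, Finset.sum_insert hi,
      RatFunc.eval_add f a (hg i (s.mem_insert_self i)) (eval₂_denom_sum_ne_zero f a s hs), ih hs]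

end RatFunc

lemma evalMat_mul {n : ℕ} {A B : Matrix (Fin n) (Fin n) (RatFunc ℂ)} {z : ℂ}
    (hA : ∀ i j, (A i j).denom.eval z ≠ 0) (hB : ∀ i j, (B i j).denom.eval z ≠ 0) :
    evalMat (A * B) z = evalMat A z * evalMat B z := by
  ext i j
  have hAB : ∀ k ∈ Finset.univ, (A i k * B k j).denom.eval z ≠ 0 := fun k _ =>
    RatFunc.eval₂_denom_mul_ne_zero _ z (hA i k) (hB k j)
  simp only [evalMat, Matrix.of_apply, Matrix.mul_apply, RatFunc.eval_sum _ z _ hAB]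
  exact Finset.sum_congr rfl fun k _ => RatFunc.eval_mul (RingHom.id ℂ) z (hA i k) (hB k j)

section IdealController

variable {m R : Type*} [Fintype m] [DecidableEq m] [CommRing R] {G T : Matrix m m R}

lemma one_add_mul_idealController (hG : IsUnit G.det) (hT : IsUnit (1 - T).det) :
    1 + G * (G⁻¹ * T * (1 - T)⁻¹) = (1 - T)⁻¹ := by
  calc 1 + G * (G⁻¹ * T * (1 - T)⁻¹)
      = (1 - T) * (1 - T)⁻¹ + T * (1 - T)⁻¹ := by
        rw [Matrix.mul_nonsing_inv _ hT, ← Matrix.mul_assoc, ← Matrix.mul_assoc,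
          Matrix.mul_nonsing_inv _ hG, Matrix.one_mul]
    _ = (1 - T)⁻¹ := by rw [← add_mul, sub_add_cancel, Matrix.one_mul]

/-- With the ideal controller, the closed-loop map `Cd (I + G Cd)⁻¹` is `G⁻¹ T`. -/
lemma idealController_mul_inv_one_add (hG : IsUnit G.det) (hT : IsUnit (1 - T).det) :
    G⁻¹ * T * (1 - T)⁻¹ * (1 + G * (G⁻¹ * T * (1 - T)⁻¹))⁻¹ = G⁻¹ * T := by
  rw [one_add_mul_idealController hG hT, Matrix.nonsing_inv_nonsing_inv _ hT, Matrix.mul_assoc,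
    Matrix.nonsing_inv_mul _ hT, Matrix.mul_one]

end IdealController

theorem stmt_3_general {n : ℕ} (G0 Td : Matrix (Fin n) (Fin n) (RatFunc ℂ))
    (hG0 : IsUnit G0) (hTd : IsUnit (1 - Td))
    (Cd : Matrix (Fin n) (Fin n) (RatFunc ℂ))
    (hCd : Cd = G0⁻¹ * Td * (1 - Td)⁻¹)
    (hstab3 : MatStable (Cd * (1 + G0 * Cd)⁻¹))
    (znm : ℂ) (hz : 1 < ‖znm‖)
    (y : Fin n → ℂ)
    (hnopole : ∀ i j, (RatFunc.denom (G0 i j)).eval znm ≠ 0)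
    (hzero : Matrix.vecMul (star y) (evalMat G0 znm) = 0) :
    Matrix.vecMul (star y) (evalMat Td znm) = 0 := by
  have hdG : IsUnit G0.det := (Matrix.isUnit_iff_isUnit_det _).mp hG0
  have hdT : IsUnit (1 - Td).det := (Matrix.isUnit_iff_isUnit_det _).mp hTd
  rw [hCd, idealController_mul_inv_one_add hdG hdT] at hstab3
  have hfactor : Td = G0 * (G0⁻¹ * Td) := by
    rw [← Matrix.mul_assoc, Matrix.mul_nonsing_inv _ hdG, Matrix.one_mul]
  rw [hfactor, evalMat_mul hnopole fun i j => hstab3 i j znm hz.le, ← Matrix.vecMul_vecMul,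
    hzero, Matrix.zero_vecMul]

/-- if `z_nm` (with `|z_nm| > 1`) is a transmission zero of `G0` with
left (output) zero direction `y ≠ 0` (i.e. `yᴴ G0(z_nm) = 0`, `z_nm` not a pole of `G0`),
and the closed loop with the ideal controller `Cd = G0⁻¹ Td (I - Td)⁻¹` is internally
stable (all four closed-loop transfer matrices stable), then `yᴴ Td(z_nm) = 0`. -/
theorem stmt_3 {n : ℕ} (G0 Td : Matrix (Fin n) (Fin n) (RatFunc ℂ))
    (hG0 : IsUnit G0) (hTd : IsUnit (1 - Td))
    (Cd : Matrix (Fin n) (Fin n) (RatFunc ℂ))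
    (hCd : Cd = G0⁻¹ * Td * (1 - Td)⁻¹)
    (hU : IsUnit (1 + G0 * Cd))
    (hstab1 : MatStable ((1 + G0 * Cd)⁻¹))
    (hstab2 : MatStable ((1 + G0 * Cd)⁻¹ * G0))
    (hstab3 : MatStable (Cd * (1 + G0 * Cd)⁻¹))
    (hstab4 : MatStable (Cd * (1 + G0 * Cd)⁻¹ * G0))
    (znm : ℂ) (hz : 1 < ‖znm‖)
    (y : Fin n → ℂ) (hy : y ≠ 0)
    (hnopole : ∀ i j, (RatFunc.denom (G0 i j)).eval znm ≠ 0)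
    (hzero : Matrix.vecMul (star y) (evalMat G0 znm) = 0) :
    Matrix.vecMul (star y) (evalMat Td znm) = 0 :=
  stmt_3_general G0 Td hG0 hTd Cd hCd hstab3 znm hz y hnopole hzero
end

section
/- If Td is a diagonal n×n rational transfer matrix in which every diagonal entry vanishes at z with |z| > 1, and the plant G0 has a transmission zero at z of multiplicity 1 (det G0 has a simple zero at z, z not a pole of G0), then the ideal controller Cd = G0^{-1} Td (I - Td)^{-1} satisfies det Cd(z) = 0, i.e. the controller itself must contribute NMP zeros. -/
open Polynomial

lemma ratfunc_key {z : ℂ} {p q : ℂ[X]} (hq : q.eval z ≠ 0) (hp : p.eval z = 0)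
    (f : RatFunc ℂ)
    (hf : f = algebraMap ℂ[X] (RatFunc ℂ) p / algebraMap ℂ[X] (RatFunc ℂ) q) :
    (RatFunc.denom f).eval z ≠ 0 ∧ RatFunc.eval (RingHom.id ℂ) z f = 0 := by
  have hq0 : q ≠ 0 := fun h => hq (by simp [h])
  have hdvd : f.denom ∣ q := (RatFunc.denom_dvd hq0).2 ⟨p, hf⟩
  obtain ⟨c, hc⟩ := hdvd
  have hden : (RatFunc.denom f).eval z ≠ 0 := by
    intro h
    apply hq
    rw [hc, eval_mul, h, zero_mul]
  refine ⟨hden, ?_⟩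
  have h1 : algebraMap ℂ[X] (RatFunc ℂ) f.num / algebraMap ℂ[X] (RatFunc ℂ) f.denom
      = algebraMap ℂ[X] (RatFunc ℂ) p / algebraMap ℂ[X] (RatFunc ℂ) q := by
    rw [RatFunc.num_div_denom, hf]
  have hdnz : algebraMap ℂ[X] (RatFunc ℂ) f.denom ≠ 0 :=
    RatFunc.algebraMap_ne_zero f.denom_ne_zero
  have hqnz : algebraMap ℂ[X] (RatFunc ℂ) q ≠ 0 := RatFunc.algebraMap_ne_zero hq0
  rw [div_eq_div_iff hdnz hqnz, ← map_mul, ← map_mul] at h1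
  have h2 : f.num * q = p * f.denom := RatFunc.algebraMap_injective ℂ h1
  have h3 : (f.num.eval z) * (q.eval z) = 0 := by
    have := congrArg (Polynomial.eval z) h2
    simp only [eval_mul] at this
    rw [this, hp, zero_mul]
  have hnum : f.num.eval z = 0 := by
    rcases mul_eq_zero.1 h3 with h | h
    · exact h
    · exact absurd h hq
  rw [RatFunc.eval]
  show Polynomial.eval z f.num / Polynomial.eval z f.denom = 0
  rw [hnum, zero_div]

lemma ratfunc_eval_id (z : ℂ) (g : RatFunc ℂ) :
    RatFunc.eval (RingHom.id ℂ) z g = g.num.eval z / g.denom.eval z := rfl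

/-- let `Td` be a diagonal `n×n` rational transfer matrix (`n ≥ 2`)
whose diagonal entries all vanish at a point `z` with `|z| > 1` (and have no pole
there), and let the plant `G0` have a transmission zero at `z` of multiplicity 1
(`det G0` has a simple zero at `z`, and `z` is not a pole of `G0`). If
`det(I - Td)(z) ≠ 0`, then the ideal controller `Cd = G0⁻¹ Td (I - Td)⁻¹`
satisfies `det Cd(z) = 0` (and `z` is not a pole of `det Cd`): the controller
itself must contribute NMP zeros. -/
theorem stmt_19 {n : ℕ} (hn : 2 ≤ n)
    (G0 Td : Matrix (Fin n) (Fin n) (RatFunc ℂ))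
    (hG0 : IsUnit G0) (hITd : IsUnit (1 - Td))
    (z : ℂ) (hz : 1 < ‖z‖)
    -- Td is diagonal
    (hdiag : ∀ i j : Fin n, i ≠ j → Td i j = 0)
    -- every diagonal entry of Td has no pole at z and vanishes at z
    (hTdnopole : ∀ i : Fin n, (RatFunc.denom (Td i i)).eval z ≠ 0)
    (hTdzero : ∀ i : Fin n, RatFunc.eval (RingHom.id ℂ) z (Td i i) = 0)
    -- z is not a pole of G0, and det G0 has a simple zero at z
    (hG0nopole : ∀ i j : Fin n, (RatFunc.denom (G0 i j)).eval z ≠ 0)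
    (hdetnopole : (RatFunc.denom G0.det).eval z ≠ 0)
    (hdetzero : (RatFunc.num G0.det).eval z = 0)
    (hsimple : ((RatFunc.num G0.det).derivative).eval z ≠ 0)
    -- det (I - Td) has no zero (and no pole) at z
    (hITdnopole : (RatFunc.denom (1 - Td : Matrix (Fin n) (Fin n) (RatFunc ℂ)).det).eval z ≠ 0)
    (hITdzero : RatFunc.eval (RingHom.id ℂ) z (1 - Td : Matrix (Fin n) (Fin n) (RatFunc ℂ)).det ≠ 0)
    (Cd : Matrix (Fin n) (Fin n) (RatFunc ℂ))
    (hCd : Cd = G0⁻¹ * Td * (1 - Td)⁻¹) :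
    (RatFunc.denom Cd.det).eval z ≠ 0 ∧
    RatFunc.eval (RingHom.id ℂ) z Cd.det = 0 := by
  set φ := algebraMap ℂ[X] (RatFunc ℂ) with hφdef
  -- Td is the diagonal matrix of its diagonal entries
  have hTdd : Td = Matrix.diagonal (fun i => Td i i) := by
    ext i j
    by_cases h : i = j
    · subst h; simp [Matrix.diagonal]
    · rw [Matrix.diagonal_apply_ne _ h]; exact hdiag i j h
  have detTd : Td.det = ∏ i, Td i i := by
    conv_lhs => rw [hTdd]
    exact Matrix.det_diagonal
  -- numerators of diagonal entries vanish at z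
  have hnumTd : ∀ i, ((Td i i).num).eval z = 0 := by
    intro i
    have h := hTdzero i
    rw [ratfunc_eval_id, _root_.div_eq_zero_iff] at h
    rcases h with h | h
    · exact h
    · exact absurd h (hTdnopole i)
  have hdvdN : ∀ i : Fin n, (X - C z) ∣ (Td i i).num := fun i =>
    dvd_iff_isRoot.2 (hnumTd i)
  choose N hN using hdvdN
  -- factor det G0 numerator
  obtain ⟨A₁, hA1⟩ : (X - C z) ∣ (RatFunc.num G0.det) := dvd_iff_isRoot.2 hdetzero
  have hA1z : A₁.eval z ≠ 0 := by
    have h := hsimple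
    rw [hA1] at h
    simpa using h
  -- det(1-Td) numerator nonzero at z
  have hPz : ((1 - Td : Matrix (Fin n) (Fin n) (RatFunc ℂ)).det.num).eval z ≠ 0 := by
    intro h
    apply hITdzero
    rw [ratfunc_eval_id, h, zero_div]
  -- nonvanishing determinants
  have ha0 : G0.det ≠ 0 := ((Matrix.isUnit_iff_isUnit_det _).1 hG0).ne_zero
  have hb0 : (1 - Td : Matrix (Fin n) (Fin n) (RatFunc ℂ)).det ≠ 0 :=
    ((Matrix.isUnit_iff_isUnit_det _).1 hITd).ne_zero
  -- determinant of Cd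
  have hCddet : Cd.det = Td.det * G0.det⁻¹ *
      ((1 - Td : Matrix (Fin n) (Fin n) (RatFunc ℂ)).det)⁻¹ := by
    rw [hCd, Matrix.det_mul, Matrix.det_mul, Matrix.det_nonsing_inv,
      Matrix.det_nonsing_inv, Ring.inverse_eq_inv']
    ring
  -- the explicit fraction representation
  set p : ℂ[X] := (X - C z)^(n-1) * (∏ i, N i) * (RatFunc.denom G0.det) *
      (RatFunc.denom (1 - Td : Matrix (Fin n) (Fin n) (RatFunc ℂ)).det) with hpdef
  set q : ℂ[X] := A₁ * (∏ i, (Td i i).denom) *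
      (RatFunc.num (1 - Td : Matrix (Fin n) (Fin n) (RatFunc ℂ)).det) with hqdef
  have hp : p.eval z = 0 := by
    rw [hpdef]
    simp [zero_pow (show n - 1 ≠ 0 by omega)]
  have hq : q.eval z ≠ 0 := by
    rw [hqdef]
    simp only [eval_mul, Polynomial.eval_prod]
    exact mul_ne_zero (mul_ne_zero hA1z
      (Finset.prod_ne_zero_iff.2 fun i _ => hTdnopole i)) hPz
  -- nonzeroness of various polynomials
  have hXz : φ (X - C z) ≠ 0 := RatFunc.algebraMap_ne_zero (X_sub_C_ne_zero z)
  have hA1ne : φ A₁ ≠ 0 := RatFunc.algebraMap_ne_zero (fun h => hA1z (by simp [h]))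
  have hdenne : ∀ i : Fin n, φ (Td i i).denom ≠ 0 :=
    fun i => RatFunc.algebraMap_ne_zero (Td i i).denom_ne_zero
  have hprodden : (∏ i, φ (Td i i).denom) ≠ 0 :=
    Finset.prod_ne_zero_iff.2 fun i _ => hdenne i
  have hBne : φ (RatFunc.denom G0.det) ≠ 0 :=
    RatFunc.algebraMap_ne_zero G0.det.denom_ne_zero
  have hQne : φ (RatFunc.denom (1 - Td : Matrix (Fin n) (Fin n) (RatFunc ℂ)).det) ≠ 0 :=
    RatFunc.algebraMap_ne_zero (1 - Td : Matrix (Fin n) (Fin n) (RatFunc ℂ)).det.denom_ne_zero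
  have hPne : φ (RatFunc.num (1 - Td : Matrix (Fin n) (Fin n) (RatFunc ℂ)).det) ≠ 0 :=
    RatFunc.algebraMap_ne_zero (fun h => hPz (by simp [h]))
  have hAne : φ (RatFunc.num G0.det) ≠ 0 :=
    RatFunc.algebraMap_ne_zero (RatFunc.num_ne_zero ha0)
  -- fraction representations
  have e1 : G0.det = φ (RatFunc.num G0.det) / φ (RatFunc.denom G0.det) :=
    (RatFunc.num_div_denom _).symm
  have e2 : (1 - Td : Matrix (Fin n) (Fin n) (RatFunc ℂ)).det =
      φ (RatFunc.num (1 - Td : Matrix (Fin n) (Fin n) (RatFunc ℂ)).det) /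
      φ (RatFunc.denom (1 - Td : Matrix (Fin n) (Fin n) (RatFunc ℂ)).det) :=
    (RatFunc.num_div_denom _).symm
  have e3 : Td.det = (∏ i, φ (Td i i).num) / (∏ i, φ (Td i i).denom) := by
    rw [detTd, ← Finset.prod_div_distrib]
    exact Finset.prod_congr rfl fun i _ => (RatFunc.num_div_denom _).symm
  have eprod : (∏ i, φ (Td i i).num) = φ (X - C z) ^ n * ∏ i, φ (N i) := by
    calc (∏ i, φ (Td i i).num) = ∏ i : Fin n, (φ (X - C z) * φ (N i)) :=
        Finset.prod_congr rfl fun i _ => by rw [hN i, map_mul]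
      _ = φ (X - C z) ^ n * ∏ i, φ (N i) := by
        rw [Finset.prod_mul_distrib, Finset.prod_const, Finset.card_univ, Fintype.card_fin]
  have hpow : φ (X - C z) ^ n = φ (X - C z) ^ (n - 1) * φ (X - C z) := by
    conv_lhs => rw [show n = (n - 1) + 1 by omega]
    rw [pow_succ]
  have hqne : φ q ≠ 0 := RatFunc.algebraMap_ne_zero (fun h => hq (by simp [h]))
  have hrep : Cd.det = φ p / φ q := by
    rw [hCddet, e1, e2, e3, eprod, hpow, hA1, inv_div, inv_div, map_mul,
      div_mul_div_comm, div_mul_div_comm,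
      div_eq_div_iff (mul_ne_zero (mul_ne_zero hprodden (mul_ne_zero hXz hA1ne)) hPne) hqne,
      hpdef, hqdef]
    simp only [map_mul, map_pow, map_prod]
    ring
  exact ratfunc_key hq hp Cd.det hrep
end
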